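/- arXiv:2311.11360 — 10 statements merged into one kernel-verified Lean document; each statement's English description precedes it below -/
import Mathlib

section
/- Let G be a locally compact group, α an automorphism of G, and suppose α is contracting, meaning αⁿ(x) → 1 as n → ∞ uniformly for x in compact subsets of G. Suppose G is totally disconnected abelian (written additively as a module M over ℤ[α^{±1}]), and let Ω be a compact open subgroup of M with α(Ω) ⊆ Ω. Then for every v ∈ M: v ∈ Ω if and only if α(v) − v ∈ Ω. -/
/-! If `α v - v ∈ Ω`, then telescoping along the `α`-stable subgroup `Ω` gives `αⁿ v - v ∈ Ω`
for every `n`; since `α` is contracting and `Ω` is a neighbourhood of `0`, some `αⁿ v` lies in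
`Ω`, hence so does `v`. -/

open Filter Topology

theorem AddSubgroup.iterate_sub_self_mem {M F : Type*} [AddGroup M] [FunLike F M M]
    [AddMonoidHomClass F M M] (f : F) {H : AddSubgroup M} (hH : ∀ x ∈ H, f x ∈ H) {v : M}
    (hv : f v - v ∈ H) (n : ℕ) : f^[n] v - v ∈ H := by
  induction n with
  | zero => simp
  | succ n ih =>
    have hstep : f^[n] (f v - v) ∈ H := Set.MapsTo.iterate hH n hv
    have htelescope : f^[n + 1] v - v = f^[n] (f v - v) + (f^[n] v - v) := by
      rw [iterate_map_sub, Function.iterate_succ_apply, sub_add_sub_cancel]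
    rw [htelescope]
    exact H.add_mem hstep ih

theorem stmt4_general {M : Type*} [AddCommGroup M] [TopologicalSpace M]
    (α : M ≃+ M)
    (hcontr : ∀ K : Set M, IsCompact K → ∀ U ∈ 𝓝 (0 : M),
      ∀ᶠ n : ℕ in atTop, ∀ x ∈ K, (⇑α)^[n] x ∈ U)
    (Ω : AddSubgroup M) (hΩo : IsOpen (Ω : Set M))
    (hinv : ∀ x ∈ Ω, α x ∈ Ω) (v : M) :
    v ∈ Ω ↔ α v - v ∈ Ω := by
  refine ⟨fun hv => Ω.sub_mem (hinv v hv) hv, fun h => ?_⟩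
  obtain ⟨n, hn⟩ := (hcontr {v} isCompact_singleton _ (hΩo.mem_nhds Ω.zero_mem)).exists
  simpa using Ω.sub_mem (hn v rfl) (Ω.iterate_sub_self_mem α hinv h n)

/-- let `M` be a totally disconnected locally compact abelian group,
`α` a contracting topological automorphism of `M` (iterates tend to `0` uniformly on
compact sets), and `Ω` a compact open subgroup with `α(Ω) ⊆ Ω`. Then for every `v`,
`v ∈ Ω` iff `α(v) − v ∈ Ω`. -/
theorem stmt4 {M : Type*} [AddCommGroup M] [TopologicalSpace M] [IsTopologicalAddGroup M]
    [LocallyCompactSpace M] [TotallyDisconnectedSpace M]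
    (α : M ≃+ M) (hc : Continuous α) (hc' : Continuous α.symm)
    (hcontr : ∀ K : Set M, IsCompact K → ∀ U ∈ 𝓝 (0 : M),
      ∀ᶠ n : ℕ in atTop, ∀ x ∈ K, (⇑α)^[n] x ∈ U)
    (Ω : AddSubgroup M) (hΩc : IsCompact (Ω : Set M)) (hΩo : IsOpen (Ω : Set M))
    (hinv : ∀ x ∈ Ω, α x ∈ Ω) (v : M) :
    v ∈ Ω ↔ α v - v ∈ Ω :=
  stmt4_general α hcontr Ω hΩo hinv v
end

section
/- Let M be a totally disconnected locally compact abelian group and α a contracting automorphism of M (αⁿ(x) → 0 for all x, uniformly on compacta). Then the map x ↦ α(x) − x is a topological group automorphism of M. -/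
/-!
The inverse of `α - 1` is `-∑ₙ αⁿ`. Van Dantzig's theorem makes `M` nonarchimedean (the stabiliser
of a compact open neighbourhood of `0` is an open subgroup inside it), and `M` is complete, so the
series converges because its terms tend to `0`. Uniform contraction on a compact neighbourhood
of `0`, together with continuity of the finitely many remaining iterates, keeps all `αⁿ y` in a
given open subgroup once `y` is small; open subgroups are closed, so the sum stays there too,
which gives continuity of the inverse.
-/

open Filter Topology Set
open scoped Pointwise

section VanDantzig

variable {G : Type*} [Group G] [TopologicalSpace G] [IsTopologicalGroup G]

@[to_additive]
theorem exists_openSubgroup_subset_of_isCompact_of_isOpen {C : Set G} (hCc : IsCompact C)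
    (hCo : IsOpen C) (h1 : (1 : G) ∈ C) : ∃ H : OpenSubgroup G, (H : Set G) ⊆ C := by
  obtain ⟨V, hV, hVC⟩ := compact_open_separated_mul_left hCc hCo Subset.rfl
  have hsmul : ∀ x ∈ V, x • C ⊆ C := fun x hx => (smul_set_subset_smul hx).trans hVC
  let H := MulAction.stabilizer G C
  have hVH : V ∩ V⁻¹ ⊆ H := fun x ⟨hx, hx'⟩ =>
    (hsmul x hx).antisymm (subset_smul_set_iff.2 (hsmul _ hx'))
  refine ⟨⟨H, H.isOpen_of_mem_nhds (mem_of_superset (inter_mem hV (inv_mem_nhds_one G hV)) hVH)⟩,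
    fun x hx => ?_⟩
  rw [← MulAction.mem_stabilizer_iff.1 hx]
  simpa using smul_mem_smul_set (a := x) h1

@[to_additive]
theorem NonarchimedeanGroup.of_locallyCompactSpace_of_totallyDisconnectedSpace
    [LocallyCompactSpace G] [TotallyDisconnectedSpace G] : NonarchimedeanGroup G where
  is_nonarchimedean U hU := by
    obtain ⟨K, hKc, hK⟩ := exists_compact_mem_nhds (1 : G)
    obtain ⟨C, hC, h1C, hCKU⟩ :=
      loc_compact_Haus_tot_disc_of_zero_dim.mem_nhds_iff.1 (inter_mem hK hU)
    obtain ⟨H, hHC⟩ := exists_openSubgroup_subset_of_isCompact_of_isOpen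
      (hKc.of_isClosed_subset hC.1 (hCKU.trans inter_subset_left)) hC.2 h1C
    exact ⟨H, hHC.trans (hCKU.trans inter_subset_right)⟩

end VanDantzig

theorem NonarchimedeanAddGroup.summable_of_tendsto_cofinite_zero_of_weaklyLocallyCompactSpace
    {G ι : Type*} [AddCommGroup G] [TopologicalSpace G] [NonarchimedeanAddGroup G]
    [WeaklyLocallyCompactSpace G] {u : ι → G}
    (hu : Tendsto u cofinite (𝓝 0)) : Summable u := by
  let := IsTopologicalAddGroup.rightUniformSpace G
  have := isUniformAddGroup_of_addCommGroup (G := G)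
  have := IsRightUniformAddGroup.completeSpace_of_weaklyLocallyCompactSpace (G := G)
  exact summable_of_tendsto_cofinite_zero hu

theorem eventually_forall_iterate_mem {X : Type*} [TopologicalSpace X] [WeaklyLocallyCompactSpace X]
    {f : X → X} {a : X} (hf : Continuous f) (ha : f a = a)
    (hcontr : ∀ K : Set X, IsCompact K → ∀ U ∈ 𝓝 a, ∀ᶠ n : ℕ in atTop, ∀ x ∈ K, f^[n] x ∈ U)
    {U : Set X} (hU : U ∈ 𝓝 a) : ∀ᶠ x in 𝓝 a, ∀ n, f^[n] x ∈ U := by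
  obtain ⟨K, hKc, hK⟩ := WeaklyLocallyCompactSpace.exists_compact_mem_nhds a
  obtain ⟨N, hN⟩ := eventually_atTop.1 (hcontr K hKc U hU)
  have hsmall : ∀ᶠ x in 𝓝 a, ∀ n ∈ Iio N, f^[n] x ∈ U :=
    (eventually_all_finite (finite_Iio N)).2 fun n _ =>
      (hf.iterate n).continuousAt.preimage_mem_nhds (by rwa [Function.iterate_fixed ha n])
  filter_upwards [hK, hsmall] with x hxK hx n
  exact (lt_or_ge n N).elim (hx n) fun hn => hN n hn x hxK

section NeumannSeries

variable {M F : Type*} [AddCommGroup M] [TopologicalSpace M] [IsTopologicalAddGroup M] [T2Space M]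
  [FunLike F M M] [AddMonoidHomClass F M M] (f : F)

noncomputable def neumannSeries (hs : ∀ x, Summable fun n => (⇑f)^[n] x) : M →+ M :=
  AddMonoidHom.mk' (fun x => ∑' n, (⇑f)^[n] x) fun x y => by
    simp only [iterate_map_add]
    exact (hs x).tsum_add (hs y)

variable {f} (hs : ∀ x, Summable fun n => (⇑f)^[n] x)

theorem neumannSeries_apply (x : M) : neumannSeries f hs x = ∑' n, (⇑f)^[n] x := rfl

theorem map_neumannSeries (hf : Continuous f) (x : M) :
    f (neumannSeries f hs x) = neumannSeries f hs x - x := by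
  rw [neumannSeries_apply, (hs x).map_tsum f hf, (hs x).tsum_eq_zero_add]
  simp only [Function.iterate_zero_apply, Function.iterate_succ_apply']
  abel

theorem neumannSeries_map (hf : Continuous f) (x : M) :
    neumannSeries f hs (f x) = f (neumannSeries f hs x) := by
  simp only [neumannSeries_apply, (hs x).map_tsum f hf, ← Function.iterate_succ_apply' f,
    Function.iterate_succ_apply]

noncomputable def subSelfEquiv (hf : Continuous f) : M ≃+ M where
  toFun x := f x - x
  invFun y := -neumannSeries f hs y
  left_inv x := by
    simp only [map_sub, neumannSeries_map hs hf, map_neumannSeries hs hf]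
    abel
  right_inv y := by
    simp only [map_neg, map_neumannSeries hs hf]
    abel
  map_add' x y := by
    simp only [map_add]
    abel

end NeumannSeries

theorem continuous_neumannSeries {M F : Type*} [AddCommGroup M] [TopologicalSpace M]
    [NonarchimedeanAddGroup M] [T2Space M] [WeaklyLocallyCompactSpace M] [FunLike F M M]
    [AddMonoidHomClass F M M] {f : F} (hs : ∀ x, Summable fun n => (⇑f)^[n] x) (hf : Continuous f)
    (hcontr : ∀ K : Set M, IsCompact K → ∀ U ∈ 𝓝 (0 : M),
      ∀ᶠ n : ℕ in atTop, ∀ x ∈ K, (⇑f)^[n] x ∈ U) :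
    Continuous (neumannSeries f hs) := by
  refine continuous_of_continuousAt_zero _ fun U hU => ?_
  rw [map_zero] at hU
  obtain ⟨H, hHU⟩ := NonarchimedeanAddGroup.is_nonarchimedean U hU
  exact (eventually_forall_iterate_mem hf (map_zero f) hcontr H.mem_nhds_zero).mono
    fun y hy => hHU (tsum_mem H.isClosed hy)

theorem stmt5_general {M : Type*} [AddCommGroup M] [TopologicalSpace M] [IsTopologicalAddGroup M]
    [LocallyCompactSpace M] [TotallyDisconnectedSpace M]
    (α : M ≃+ M) (hc : Continuous α)
    (hcontr : ∀ K : Set M, IsCompact K → ∀ U ∈ 𝓝 (0 : M),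
      ∀ᶠ n : ℕ in atTop, ∀ x ∈ K, (⇑α)^[n] x ∈ U) :
    ∃ β : M ≃+ M, Continuous β ∧ Continuous β.symm ∧ ∀ x : M, β x = α x - x := by
  have := NonarchimedeanAddGroup.of_locallyCompactSpace_of_totallyDisconnectedSpace (G := M)
  have hs : ∀ x, Summable fun n => (⇑α)^[n] x := fun x =>
    NonarchimedeanAddGroup.summable_of_tendsto_cofinite_zero_of_weaklyLocallyCompactSpace <| by
      rw [Nat.cofinite_eq_atTop]
      exact fun U hU => (hcontr {x} isCompact_singleton U hU).mono fun n hn => hn x rfl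
  exact ⟨subSelfEquiv hs hc, hc.sub continuous_id, (continuous_neumannSeries hs hc hcontr).neg,
    fun _ => rfl⟩

/-- if `M` is a totally disconnected locally compact abelian group and `α`
a contracting topological automorphism of `M` (iterates tend to `0` uniformly on compact
sets), then `x ↦ α(x) − x` is a topological group automorphism of `M`. -/
theorem stmt5 {M : Type*} [AddCommGroup M] [TopologicalSpace M] [IsTopologicalAddGroup M]
    [LocallyCompactSpace M] [TotallyDisconnectedSpace M]
    (α : M ≃+ M) (hc : Continuous α) (hc' : Continuous α.symm)
    (hcontr : ∀ K : Set M, IsCompact K → ∀ U ∈ 𝓝 (0 : M),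
      ∀ᶠ n : ℕ in atTop, ∀ x ∈ K, (⇑α)^[n] x ∈ U) :
    ∃ β : M ≃+ M, Continuous β ∧ Continuous β.symm ∧ ∀ x : M, β x = α x - x :=
  stmt5_general α hc hcontr
end

section
/- Let G be a totally disconnected locally compact group and α a contracting automorphism of G. Let n_G = [Ω : α(Ω)] be the index for some compact open subgroup Ω with α(Ω) ⊆ Ω (this index is a positive integer independent of Ω, equal to the module of α⁻¹ on Haar measure). If H is a closed α-invariant subgroup (α(H) = H) with n_H = n_G, then H = G. Consequently, every strictly ascending chain of closed α-invariant subgroups of G has length at most log₂(n_G). -/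
open Filter Topology Pointwise

/-!
For closed `α`-invariant subgroups `H ≤ K` put `A = Ω ∩ H ≤ B = Ω ∩ K`. The cosets of `α(B)`
in `B` that meet `A` are `n_H` many, and so are their translates by any `g ∈ B`; if
`n_K < 2 n_H` the two families overlap, so `B ⊆ A α(B) A`. Applying `α` repeatedly gives
`B ⊆ A αⁿ(B) A` for every `n`; as `αⁿ(B)` shrinks to `1` and `A` is compact, `B ⊆ A`, and
then `K ≤ H` because some `αⁿ` pushes each element of `K` into `Ω`. So `n_K ≥ 2 n_H` along
every strict inclusion, and `n_H ≥ 1`.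
-/

theorem Subgroup.coe_subset_mul_mul_of_relIndex_lt {G : Type*} [Group G] {A B C : Subgroup G}
    (hAB : A ≤ B) (hCB : C.relIndex B ≠ 0) (hlt : C.relIndex B < 2 * C.relIndex A) :
    (B : Set G) ⊆ A * C * A := by
  intro g hg
  have : Finite (B ⧸ C.subgroupOf B) := Subgroup.index_ne_zero_iff_finite.mp hCB
  let e := Subgroup.quotientSubgroupOfEmbeddingOfLE C hAB
  have hS : (Set.range e).ncard = C.relIndex A := by
    rw [← Set.image_univ, Set.ncard_image_of_injective _ e.injective, Set.ncard_univ]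
    rfl
  obtain ⟨_, ⟨q₁, rfl⟩, ⟨_, ⟨q₂, rfl⟩, h⟩⟩ := Set.nonempty_inter_of_lt_ncard_add_ncard
    (s := Set.range e) (t := (⟨g, hg⟩ : B) • Set.range e)
    (by rwa [Set.ncard_smul_set, hS, ← two_mul])
  induction q₁ using QuotientGroup.induction_on with | H a₁ => ?_
  induction q₂ using QuotientGroup.induction_on with | H a₂ => ?_
  have hmem : (a₁ : G)⁻¹ * (g * a₂) ∈ C := by
    simp only [e, Subgroup.quotientSubgroupOfEmbeddingOfLE_apply_mk] at h
    simpa [Subgroup.mem_subgroupOf] using QuotientGroup.eq.mp h.symm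
  have hg : g = a₁ * ((a₁ : G)⁻¹ * (g * a₂)) * (a₂ : G)⁻¹ := by group
  rw [hg]
  exact Set.mul_mem_mul (Set.mul_mem_mul a₁.2 hmem) (inv_mem a₂.2)

theorem Subgroup.subset_mul_iterate_image_mul {G : Type*} [Group G] (f : G →* G) {A : Subgroup G}
    (hA : A.map f ≤ A) {S : Set G} (hS : S ⊆ A * f '' S * A) (n : ℕ) :
    S ⊆ A * (⇑f)^[n + 1] '' S * A := by
  have hfA : f '' A ⊆ A := fun _ hx ↦ hA hx
  induction n with
  | zero => simpa using hS
  | succ n ih =>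
    calc S ⊆ A * f '' S * A := hS
      _ ⊆ A * f '' (A * (⇑f)^[n + 1] '' S * A) * A := by gcongr
      _ ⊆ A * (A * (⇑f)^[n + 2] '' S * A) * A := by
        rw [Set.image_mul, Set.image_mul, ← Set.image_comp, ← Function.iterate_succ']
        gcongr
      _ = A * (⇑f)^[n + 2] '' S * A := by
        rw [← mul_assoc, ← mul_assoc, coe_mul_coe, mul_assoc _ _ (A : Set G), coe_mul_coe]

theorem Subgroup.relIndex_ne_zero_of_isOpen_of_isCompact {G : Type*} [Group G]
    [TopologicalSpace G] [IsTopologicalGroup G] {U B : Subgroup G}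
    (hU : IsOpen (U : Set G)) (hB : IsCompact (B : Set G)) : U.relIndex B ≠ 0 := by
  have : CompactSpace B := isCompact_iff_compactSpace.mp hB
  have := (U.subgroupOf B).quotient_finite_of_isOpen (hU.preimage continuous_subtype_val)
  exact Subgroup.index_ne_zero_of_finite

theorem IsCompact.mem_mul_of_forall_nhds_one {G : Type*} [Group G] [TopologicalSpace G]
    [IsTopologicalGroup G] [T2Space G] {K L : Set G} (hK : IsCompact K) (hL : IsCompact L) {x : G}
    (hx : ∀ U ∈ 𝓝 (1 : G), x ∈ K * U * L) : x ∈ K * L := by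
  by_contra hxKL
  set D := (fun p : G × G ↦ p.1⁻¹ * x * p.2⁻¹) '' K ×ˢ L
  have hD : IsCompact D := (hK.prod hL).image (by fun_prop)
  have h1D : (1 : G) ∉ D := by
    rintro ⟨⟨k, l⟩, ⟨hk, hl⟩, hkl⟩
    rw [mul_inv_eq_one, inv_mul_eq_iff_eq_mul] at hkl
    exact hxKL ⟨k, hk, l, hl, hkl.symm⟩
  obtain ⟨_, ⟨k, hk, u, hu, rfl⟩, l, hl, rfl⟩ : x ∈ K * Dᶜ * L :=
    hx _ (hD.isClosed.isOpen_compl.mem_nhds h1D)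
  exact hu ⟨(k, l), ⟨hk, hl⟩, by group⟩

section ContractingAutomorphism

variable {G : Type*} [Group G] (α : G ≃* G)

/-- The index `n_H = [Ω ∩ H : α(Ω ∩ H)]`. -/
noncomputable def contractionIndex (Ω H : Subgroup G) : ℕ :=
  ((Ω ⊓ H).map α.toMonoidHom).relIndex (Ω ⊓ H)

variable {α} {Ω H K : Subgroup G}

theorem Subgroup.iterate_mem_iff_of_map_eq (hH : H.map α.toMonoidHom = H) (n : ℕ) {x : G} :
    (⇑α)^[n] x ∈ H ↔ x ∈ H := by
  induction n generalizing x with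
  | zero => rfl
  | succ n ih =>
    rw [Function.iterate_succ_apply, ih]
    nth_rw 1 [← hH]
    rw [Subgroup.mem_map_equiv, MulEquiv.symm_apply_apply]

theorem Subgroup.map_inf_of_map_eq (Ω : Subgroup G) (hH : H.map α.toMonoidHom = H) :
    (Ω ⊓ H).map α.toMonoidHom = Ω.map α.toMonoidHom ⊓ H := by
  rw [Subgroup.map_inf _ _ _ α.injective, hH]

theorem relIndex_map_inf_eq_contractionIndex (hinv : Ω.map α.toMonoidHom ≤ Ω)
    (hH : H.map α.toMonoidHom = H) (hK : K.map α.toMonoidHom = K) (hHK : H ≤ K) :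
    ((Ω ⊓ K).map α.toMonoidHom).relIndex (Ω ⊓ H) = contractionIndex α Ω H := by
  have hcap : Ω ⊓ H ⊓ (Ω ⊓ K).map α.toMonoidHom = (Ω ⊓ H).map α.toMonoidHom := by
    rw [Subgroup.map_inf_of_map_eq Ω hK, Subgroup.map_inf_of_map_eq Ω hH]
    exact le_antisymm (le_inf (inf_le_right.trans inf_le_left) (inf_le_left.trans inf_le_right))
      (le_inf (inf_le_inf_right H hinv) (inf_le_inf_left _ hHK))
  rw [← Subgroup.inf_relIndex_left, hcap, contractionIndex]

theorem contractionIndex_mono (hinv : Ω.map α.toMonoidHom ≤ Ω)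
    (hH : H.map α.toMonoidHom = H) (hK : K.map α.toMonoidHom = K) (hHK : H ≤ K)
    (hK₀ : contractionIndex α Ω K ≠ 0) : contractionIndex α Ω H ≤ contractionIndex α Ω K := by
  rw [← relIndex_map_inf_eq_contractionIndex hinv hH hK hHK]
  exact Subgroup.relIndex_le_of_le_right (inf_le_inf_left Ω hHK) hK₀

theorem coe_inf_subset_mul_image_mul (hinv : Ω.map α.toMonoidHom ≤ Ω)
    (hH : H.map α.toMonoidHom = H) (hK : K.map α.toMonoidHom = K) (hHK : H ≤ K)
    (hK₀ : contractionIndex α Ω K ≠ 0)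
    (hlt : contractionIndex α Ω K < 2 * contractionIndex α Ω H) :
    ((Ω ⊓ K : Subgroup G) : Set G) ⊆
      (Ω ⊓ H : Subgroup G) * α '' (Ω ⊓ K : Subgroup G) * (Ω ⊓ H : Subgroup G) := by
  rw [← relIndex_map_inf_eq_contractionIndex hinv hH hK hHK] at hlt
  exact Subgroup.coe_subset_mul_mul_of_relIndex_lt (inf_le_inf_left Ω hHK) hK₀ hlt

variable [TopologicalSpace G] [IsTopologicalGroup G]

theorem contractionIndex_ne_zero (hc' : Continuous α.symm) (hΩc : IsCompact (Ω : Set G))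
    (hΩo : IsOpen (Ω : Set G)) (hHc : IsClosed (H : Set G))
    (hH : H.map α.toMonoidHom = H) : contractionIndex α Ω H ≠ 0 := by
  have hαΩ : IsOpen (Ω.map α.toMonoidHom : Set G) := by
    rw [Subgroup.map_equiv_eq_comap_symm']
    exact hΩo.preimage hc'
  have hfin : (Ω.map α.toMonoidHom).relIndex (Ω ⊓ H) ≠ 0 :=
    Subgroup.relIndex_ne_zero_of_isOpen_of_isCompact hαΩ (hΩc.inter_right hHc)
  rw [← Subgroup.inf_relIndex_right] at hfin
  refine mt (Subgroup.relIndex_eq_zero_of_le_left ?_) hfin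
  rw [Subgroup.map_inf_of_map_eq Ω hH]
  exact inf_le_inf_left _ inf_le_right

theorem two_mul_contractionIndex_le_of_lt [T2Space G] (hc' : Continuous α.symm)
    (hcontr : ∀ K : Set G, IsCompact K → ∀ U ∈ 𝓝 (1 : G),
      ∀ᶠ n : ℕ in atTop, ∀ x ∈ K, (⇑α)^[n] x ∈ U)
    (hΩc : IsCompact (Ω : Set G)) (hΩo : IsOpen (Ω : Set G)) (hinv : Ω.map α.toMonoidHom ≤ Ω)
    (hcover : ∀ x : G, ∃ n : ℕ, (⇑α)^[n] x ∈ Ω) (hHc : IsClosed (H : Set G))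
    (hKc : IsClosed (K : Set G)) (hH : H.map α.toMonoidHom = H) (hK : K.map α.toMonoidHom = K)
    (hHK : H < K) : 2 * contractionIndex α Ω H ≤ contractionIndex α Ω K := by
  by_contra! hlt
  set A := Ω ⊓ H
  set B := Ω ⊓ K
  have hA : IsCompact (A : Set G) := hΩc.inter_right hHc
  have hαA : A.map α.toMonoidHom ≤ A := by
    rw [Subgroup.map_inf_of_map_eq Ω hH]
    exact inf_le_inf_right H hinv
  have hstep := coe_inf_subset_mul_image_mul hinv hH hK hHK.le
    (contractionIndex_ne_zero hc' hΩc hΩo hKc hK) hlt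
  have hBA : (B : Set G) ⊆ A := by
    intro x hx
    rw [← coe_mul_coe A]
    refine hA.mem_mul_of_forall_nhds_one hA fun U hU ↦ ?_
    obtain ⟨N, hN⟩ := (hcontr B (hΩc.inter_right hKc) U hU).exists_forall_of_atTop
    have hαB : (⇑α.toMonoidHom)^[N + 1] '' B ⊆ U := by
      rintro _ ⟨y, hy, rfl⟩
      exact hN (N + 1) N.le_succ y hy
    exact Set.mul_subset_mul_right (Set.mul_subset_mul_left hαB)
      (Subgroup.subset_mul_iterate_image_mul α.toMonoidHom hαA hstep N hx)
  refine hHK.not_ge fun x hx ↦ ?_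
  obtain ⟨n, hn⟩ := hcover x
  rw [← Subgroup.iterate_mem_iff_of_map_eq hH n]
  exact (hBA ⟨hn, (Subgroup.iterate_mem_iff_of_map_eq hK n).mpr hx⟩).2

theorem two_pow_le_contractionIndex [T2Space G] (hc' : Continuous α.symm)
    (hcontr : ∀ K : Set G, IsCompact K → ∀ U ∈ 𝓝 (1 : G),
      ∀ᶠ n : ℕ in atTop, ∀ x ∈ K, (⇑α)^[n] x ∈ U)
    (hΩc : IsCompact (Ω : Set G)) (hΩo : IsOpen (Ω : Set G)) (hinv : Ω.map α.toMonoidHom ≤ Ω)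
    (hcover : ∀ x : G, ∃ n : ℕ, (⇑α)^[n] x ∈ Ω) {k : ℕ} {c : Fin (k + 1) → Subgroup G}
    (hc : ∀ i, IsClosed ((c i : Set G))) (hcα : ∀ i, (c i).map α.toMonoidHom = c i)
    (hmono : StrictMono c) (i : Fin (k + 1)) : 2 ^ (i : ℕ) ≤ contractionIndex α Ω (c i) := by
  induction i using Fin.induction with
  | zero => exact Nat.one_le_iff_ne_zero.mpr (contractionIndex_ne_zero hc' hΩc hΩo (hc 0) (hcα 0))
  | succ i ih =>
    rw [Fin.val_succ, pow_succ']
    exact (Nat.mul_le_mul_left 2 ih).trans (two_mul_contractionIndex_le_of_lt hc' hcontr hΩc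
      hΩo hinv hcover (hc _) (hc _) (hcα _) (hcα _) (hmono i.castSucc_lt_succ))

end ContractingAutomorphism

theorem stmt7_general {G : Type*} [Group G] [TopologicalSpace G] [IsTopologicalGroup G]
    [TotallyDisconnectedSpace G]
    (α : G ≃* G) (hc' : Continuous α.symm)
    (hcontr : ∀ K : Set G, IsCompact K → ∀ U ∈ 𝓝 (1 : G),
      ∀ᶠ n : ℕ in atTop, ∀ x ∈ K, (⇑α)^[n] x ∈ U)
    (Ω : Subgroup G) (hΩc : IsCompact (Ω : Set G)) (hΩo : IsOpen (Ω : Set G))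
    (hinv : Ω.map α.toMonoidHom ≤ Ω)
    (hcover : ∀ x : G, ∃ n : ℕ, (⇑α)^[n] x ∈ Ω) :
    (∀ H : Subgroup G, IsClosed (H : Set G) → H.map α.toMonoidHom = H →
      ((Ω ⊓ H).map α.toMonoidHom).relIndex (Ω ⊓ H) = (Ω.map α.toMonoidHom).relIndex Ω →
      H = ⊤) ∧
    (∀ (k : ℕ) (c : Fin (k + 1) → Subgroup G),
      (∀ i, IsClosed ((c i : Set G))) → (∀ i, (c i).map α.toMonoidHom = c i) →
      StrictMono c →
      (k : ℝ) ≤ Real.logb 2 ((Ω.map α.toMonoidHom).relIndex Ω)) := by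
  have htopc : IsClosed ((⊤ : Subgroup G) : Set G) := isClosed_univ
  have htop : (⊤ : Subgroup G).map α.toMonoidHom = ⊤ :=
    Subgroup.map_top_of_surjective _ α.surjective
  have hnG : contractionIndex α Ω ⊤ = (Ω.map α.toMonoidHom).relIndex Ω := by
    rw [contractionIndex, inf_top_eq]
  refine ⟨fun H hHc hH heq ↦ ?_, fun k c hc hcα hmono ↦ ?_⟩
  · change contractionIndex α Ω H = _ at heq
    by_contra hH_top
    have h2 := two_mul_contractionIndex_le_of_lt hc' hcontr hΩc hΩo hinv hcover hHc htopc hH htop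
      (lt_top_iff_ne_top.mpr hH_top)
    have h0 := contractionIndex_ne_zero hc' hΩc hΩo hHc hH
    rw [hnG, ← heq] at h2
    omega
  · have hlast : 2 ^ k ≤ (Ω.map α.toMonoidHom).relIndex Ω :=
      hnG ▸ (two_pow_le_contractionIndex hc' hcontr hΩc hΩo hinv hcover hc hcα hmono
        (Fin.last k)).trans (contractionIndex_mono hinv (hcα _) htop le_top
          (contractionIndex_ne_zero hc' hΩc hΩo htopc htop))
    rw [Real.le_logb_iff_rpow_le one_lt_two (by exact_mod_cast (Nat.one_le_two_pow.trans hlast)),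
      Real.rpow_natCast]
    exact_mod_cast hlast

/-- let `G` be a totally disconnected locally compact group with a contracting
automorphism `α`, and `Ω` a compact open subgroup with `α(Ω) ⊆ Ω` and `G = ⋃ α⁻ⁿ(Ω)`.
Set `n_G = [Ω : α(Ω)]` and, for a closed `α`-invariant subgroup `H`,
`n_H = [Ω ∩ H : α(Ω ∩ H)]`. If `n_H = n_G` then `H = G`; consequently every strictly
ascending chain of closed `α`-invariant subgroups has length at most `log₂ n_G`. -/
theorem stmt7 {G : Type*} [Group G] [TopologicalSpace G] [IsTopologicalGroup G]
    [LocallyCompactSpace G] [TotallyDisconnectedSpace G]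
    (α : G ≃* G) (hc : Continuous α) (hc' : Continuous α.symm)
    (hcontr : ∀ K : Set G, IsCompact K → ∀ U ∈ 𝓝 (1 : G),
      ∀ᶠ n : ℕ in atTop, ∀ x ∈ K, (⇑α)^[n] x ∈ U)
    (Ω : Subgroup G) (hΩc : IsCompact (Ω : Set G)) (hΩo : IsOpen (Ω : Set G))
    (hinv : Ω.map α.toMonoidHom ≤ Ω)
    (hcover : ∀ x : G, ∃ n : ℕ, (⇑α)^[n] x ∈ Ω) :
    (∀ H : Subgroup G, IsClosed (H : Set G) → H.map α.toMonoidHom = H →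
      ((Ω ⊓ H).map α.toMonoidHom).relIndex (Ω ⊓ H) = (Ω.map α.toMonoidHom).relIndex Ω →
      H = ⊤) ∧
    (∀ (k : ℕ) (c : Fin (k + 1) → Subgroup G),
      (∀ i, IsClosed ((c i : Set G))) → (∀ i, (c i).map α.toMonoidHom = c i) →
      StrictMono c →
      (k : ℝ) ≤ Real.logb 2 ((Ω.map α.toMonoidHom).relIndex Ω)) :=
  stmt7_general α hc' hcontr Ω hΩc hΩo hinv hcover
end

section
/- Let G be a group generated by S ∪ {u} with S symmetric (S = S⁻¹). Let W₀ ⊆ G be a subgroup and set W_n = uⁿ W₀ u^{-n} for n ∈ ℤ. Assume: (1) for every n ≥ 0, S normalizes W_n; (2) u W₀ u⁻¹ ⊆ W₀; (3) u S u⁻¹ is contained in the smallest subgroup containing S that is stable under conjugation by u⁻¹. Then the normal closure of W₀ in G equals the ascending union ⋃_{n≥0} u^{-n} W₀ uⁿ. -/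
/-!
Let `K` be the `u⁻`-subgroup generated by `S`. By (3) it is also stable under conjugation by `u`,
so it contains every `uⁿ s u⁻ⁿ` with `s ∈ S`. By (1), the intersection of the normalizers of the
`Wₙ` is a subgroup containing `S` and stable under conjugation by `u⁻¹` (which maps `N(Wₙ₊₁)` onto
`N(Wₙ)`), hence contains `K`; in particular `K` normalizes `W₀`. Therefore each `s ∈ S` normalizes
every `u⁻ⁿ W₀ uⁿ` and hence their union `U`, while by (2) conjugation by `u` maps `U` onto itself.
So `U` is normalized by the generators `S ∪ {u}`, i.e. normal; it contains `W₀` and consists of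
conjugates of `W₀`, so it is the normal closure.
-/

def uMinusSubgroup {G : Type*} [Group G] (u : G) (S : Set G) : Subgroup G :=
  sInf {H : Subgroup G | S ⊆ H ∧ ∀ x ∈ H, u⁻¹ * x * u ∈ H}

namespace Subgroup

variable {G : Type*} [Group G]

theorem map_conj_one (H : Subgroup G) : H.map (MulAut.conj (1 : G)).toMonoidHom = H := by
  ext x
  simp

theorem map_conj_map_conj (H : Subgroup G) (g h : G) :
    (H.map (MulAut.conj h).toMonoidHom).map (MulAut.conj g).toMonoidHom =
      H.map (MulAut.conj (g * h)).toMonoidHom := by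
  rw [map_map]
  congr 1
  ext
  simp [mul_assoc]

theorem mem_normalizer_map_conj_iff {H : Subgroup G} {g x : G} :
    x ∈ normalizer (H.map (MulAut.conj g).toMonoidHom : Set G) ↔
      g⁻¹ * x * g ∈ normalizer (H : Set G) := by
  rw [← map_equiv_normalizer_eq, mem_map_equiv, MulAut.conj_symm_apply]

theorem normal_of_closure_eq_top {H : Subgroup G} {A : Set G} (hA : closure A = ⊤)
    (hH : A ⊆ normalizer (H : Set G)) : H.Normal := by
  rw [← normalizer_eq_top_iff, eq_top_iff, ← hA, closure_le]
  exact hH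

theorem map_conj_le_normalClosure (H : Subgroup G) (g : G) :
    H.map (MulAut.conj g).toMonoidHom ≤ normalClosure (H : Set G) :=
  (map_mono subset_normalClosure).trans (Normal.map_conj_eq _ g).le

theorem map_conj_iSup_map_conj_inv_pow {W : Subgroup G} {u : G}
    (hW : W.map (MulAut.conj u).toMonoidHom ≤ W) :
    (⨆ n : ℕ, W.map (MulAut.conj (u ^ n)⁻¹).toMonoidHom).map (MulAut.conj u).toMonoidHom =
      ⨆ n : ℕ, W.map (MulAut.conj (u ^ n)⁻¹).toMonoidHom := by
  have hshift (n : ℕ) : (W.map (MulAut.conj (u ^ (n + 1))⁻¹).toMonoidHom).map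
      (MulAut.conj u).toMonoidHom = W.map (MulAut.conj (u ^ n)⁻¹).toMonoidHom := by
    rw [map_conj_map_conj, pow_succ, mul_inv_rev, mul_inv_cancel_left]
  rw [map_iSup]
  refine le_antisymm (iSup_le fun n => ?_) (iSup_le fun n => le_iSup_of_le (n + 1) (hshift n).ge)
  cases n with
  | zero => exact le_iSup_of_le 0 (by rwa [pow_zero, inv_one, map_conj_one])
  | succ n => exact le_iSup_of_le n (hshift n).le

theorem mem_normalizer_iSup_map_conj_inv_pow {W : Subgroup G} {u s : G}
    (hs : ∀ n : ℕ, u ^ n * s * (u ^ n)⁻¹ ∈ normalizer (W : Set G)) :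
    s ∈ normalizer ((⨆ n : ℕ, W.map (MulAut.conj (u ^ n)⁻¹).toMonoidHom : Subgroup G) : Set G) :=
  iInf_normalizer_le_normalizer_iSup _ <| mem_iInf.mpr fun n => by
    rw [mem_normalizer_map_conj_iff, inv_inv]
    exact hs n

end Subgroup

section uMinusSubgroup

open Subgroup

variable {G : Type*} [Group G] {u : G} {S : Set G}

theorem subset_uMinusSubgroup : S ⊆ uMinusSubgroup u S :=
  fun _ hs => mem_sInf.mpr fun _ hH => hH.1 hs

theorem conj_inv_mem_uMinusSubgroup {x : G} (hx : x ∈ uMinusSubgroup u S) :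
    u⁻¹ * x * u ∈ uMinusSubgroup u S :=
  mem_sInf.mpr fun H hH => hH.2 x (mem_sInf.mp hx H hH)

theorem uMinusSubgroup_le {H : Subgroup G} (hS : S ⊆ H) (hH : ∀ x ∈ H, u⁻¹ * x * u ∈ H) :
    uMinusSubgroup u S ≤ H :=
  sInf_le ⟨hS, hH⟩

theorem conj_mem_uMinusSubgroup (hu : ∀ s ∈ S, u * s * u⁻¹ ∈ uMinusSubgroup u S) {x : G}
    (hx : x ∈ uMinusSubgroup u S) : u * x * u⁻¹ ∈ uMinusSubgroup u S := by
  set K := uMinusSubgroup u S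
  have hK : K ≤ K ⊓ K.comap (MulAut.conj u).toMonoidHom := by
    refine uMinusSubgroup_le (fun s hs => ⟨subset_uMinusSubgroup hs, hu s hs⟩) ?_
    rintro y ⟨hy, -⟩
    refine ⟨conj_inv_mem_uMinusSubgroup hy, ?_⟩
    simpa [mem_comap, mul_assoc] using hy
  exact (hK hx).2

theorem conj_pow_mem_uMinusSubgroup (hu : ∀ s ∈ S, u * s * u⁻¹ ∈ uMinusSubgroup u S) (n : ℕ)
    {x : G} (hx : x ∈ uMinusSubgroup u S) : u ^ n * x * (u ^ n)⁻¹ ∈ uMinusSubgroup u S := by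
  induction n with
  | zero => simpa using hx
  | succ n ih =>
    have h : u ^ (n + 1) * x * (u ^ (n + 1))⁻¹ = u * (u ^ n * x * (u ^ n)⁻¹) * u⁻¹ := by group
    rw [h]
    exact conj_mem_uMinusSubgroup hu ih

theorem uMinusSubgroup_le_normalizer {W : Subgroup G}
    (hW : ∀ n : ℕ, S ⊆ normalizer (W.map (MulAut.conj (u ^ n)).toMonoidHom : Set G)) :
    uMinusSubgroup u S ≤ normalizer (W : Set G) := by
  have hK : uMinusSubgroup u S ≤
      ⨅ n : ℕ, normalizer (W.map (MulAut.conj (u ^ n)).toMonoidHom : Set G) := by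
    refine uMinusSubgroup_le (fun s hs => mem_iInf.mpr fun n => hW n hs) fun x hx => ?_
    refine mem_iInf.mpr fun n => ?_
    have hx := mem_iInf.mp hx (n + 1)
    rwa [pow_succ', ← map_conj_map_conj, mem_normalizer_map_conj_iff] at hx
  intro x hx
  simpa only [pow_zero, map_conj_one] using mem_iInf.mp (hK hx) 0

end uMinusSubgroup

open Subgroup in
theorem stmt10_general {G : Type*} [Group G] (S : Set G) (u : G)
    (hgen : Subgroup.closure (S ∪ {u}) = ⊤) (W₀ : Subgroup G)
    (h1 : ∀ (n : ℕ), ∀ s ∈ S,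
      (W₀.map (MulAut.conj (u ^ n)).toMonoidHom).map (MulAut.conj s).toMonoidHom =
        W₀.map (MulAut.conj (u ^ n)).toMonoidHom)
    (h2 : W₀.map (MulAut.conj u).toMonoidHom ≤ W₀)
    (h3 : ∀ s ∈ S, u * s * u⁻¹ ∈ uMinusSubgroup u S) :
    Subgroup.normalClosure (W₀ : Set G) =
      ⨆ n : ℕ, W₀.map (MulAut.conj ((u ^ n)⁻¹)).toMonoidHom := by
  have hK : uMinusSubgroup u S ≤ normalizer (W₀ : Set G) :=
    uMinusSubgroup_le_normalizer fun n s hs => mem_normalizer_iff_map_conj_eq.mpr (h1 n s hs)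
  have hconj (s) (hs : s ∈ S) (n : ℕ) : u ^ n * s * (u ^ n)⁻¹ ∈ normalizer (W₀ : Set G) :=
    hK (conj_pow_mem_uMinusSubgroup h3 n (subset_uMinusSubgroup hs))
  have hnormal := normal_of_closure_eq_top hgen <| Set.union_subset
    (fun s hs => mem_normalizer_iSup_map_conj_inv_pow (hconj s hs))
    (Set.singleton_subset_iff.mpr
      (mem_normalizer_iff_map_conj_eq.mpr (map_conj_iSup_map_conj_inv_pow h2)))
  refine le_antisymm (normalClosure_le_normal ?_) (iSup_le fun n => map_conj_le_normalClosure _ _)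
  exact le_iSup_of_le (f := fun n : ℕ => W₀.map (MulAut.conj (u ^ n)⁻¹).toMonoidHom) 0
    (by rw [pow_zero, inv_one, map_conj_one])

/-- let `G` be generated by `S ∪ {u}` with `S` symmetric, `W₀ ≤ G` a subgroup,
`Wₙ = uⁿ W₀ u⁻ⁿ`. If (1) `S` normalizes each `Wₙ` (`n ≥ 0`), (2) `u W₀ u⁻¹ ⊆ W₀`, and
(3) `u S u⁻¹` lies in the `u⁻`-subgroup generated by `S`, then the normal closure of `W₀`
equals the ascending union `⋃_{n ≥ 0} u⁻ⁿ W₀ uⁿ`. -/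
theorem stmt10 {G : Type*} [Group G] (S : Set G) (hS : S⁻¹ = S) (u : G)
    (hgen : Subgroup.closure (S ∪ {u}) = ⊤) (W₀ : Subgroup G)
    (h1 : ∀ (n : ℕ), ∀ s ∈ S,
      (W₀.map (MulAut.conj (u ^ n)).toMonoidHom).map (MulAut.conj s).toMonoidHom =
        W₀.map (MulAut.conj (u ^ n)).toMonoidHom)
    (h2 : W₀.map (MulAut.conj u).toMonoidHom ≤ W₀)
    (h3 : ∀ s ∈ S, u * s * u⁻¹ ∈ uMinusSubgroup u S) :
    Subgroup.normalClosure (W₀ : Set G) =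
      ⨆ n : ℕ, W₀.map (MulAut.conj ((u ^ n)⁻¹)).toMonoidHom :=
  stmt10_general S u hgen W₀ h1 h2 h3
end

section
/- Let Q be a locally compact abelian group, W and Q' closed subgroups with W compact and Q = W + Q'. Let χ : Q → ℝ be a continuous homomorphism (necessarily vanishing on W), and Q_χ = {q : χ(q) ≥ 0}, Q'_χ = Q' ∩ Q_χ. Then Q_χ = Q'_χ + W, and every locally compact Q-module M that is compactly generated as a Q_χ-module is compactly generated as a Q'_χ-module. -/
/-!
Since `ℝ` has no nontrivial compact subgroups, `χ` vanishes on `W`, so writing `q = w + q'`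
with `w ∈ W`, `q' ∈ Q'` gives `χ q = χ q'`; this is the decomposition `Q_χ = W + Q'_χ`.
If `K` generates `M` over `Q_χ`, then the compact set `W • K` generates it over `Q'_χ`: for a
closed `Q'_χ`-invariant subgroup `N ⊇ W • K`, the subgroup `N₀ = {x | W • x ⊆ N}` is closed,
contains `K`, and is `Q_χ`-invariant because `W + Q_χ = W + Q'_χ`; hence `N₀ = M`, and
`N ⊇ N₀` since `0 ∈ W`.
-/

namespace AddMonoidHom

variable {G : Type*}

theorem apply_nonpos_of_isCompact [AddMonoid G] [TopologicalSpace G] (χ : G →+ ℝ)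
    (hχ : Continuous χ) {W : AddSubmonoid G} (hW : IsCompact (W : Set G)) {w : G} (hw : w ∈ W) :
    χ w ≤ 0 := by
  by_contra! hpos
  obtain ⟨b, hb⟩ := (hW.image hχ).bddAbove
  obtain ⟨n, hn⟩ := Archimedean.arch (b + 1) hpos
  have hle : χ (n • w) ≤ b := hb ⟨n • w, W.nsmul_mem hw n, rfl⟩
  rw [map_nsmul] at hle
  linarith

theorem le_ker_of_isCompact [AddGroup G] [TopologicalSpace G] (χ : G →+ ℝ)
    (hχ : Continuous χ) {W : AddSubgroup G} (hW : IsCompact (W : Set G)) : W ≤ χ.ker := fun w hw =>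
  le_antisymm (χ.apply_nonpos_of_isCompact hχ (W := W.toAddSubmonoid) hW hw) <| by
    simpa using χ.apply_nonpos_of_isCompact hχ (W := W.toAddSubmonoid) hW (W.neg_mem hw)

theorem nonneg_iff_exists_add_of_le_ker [AddGroup G] (χ : G →+ ℝ) {W : AddSubgroup G}
    {H : Set G} (hW : W ≤ χ.ker) (hsum : ∀ q : G, ∃ w ∈ W, ∃ q' ∈ H, q = w + q') (q : G) :
    0 ≤ χ q ↔ ∃ w ∈ W, ∃ q' ∈ H, 0 ≤ χ q' ∧ q = w + q' := by
  have hχ : ∀ w ∈ W, ∀ q', χ (w + q') = χ q' := fun w hw q' => by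
    rw [map_add, hW hw, zero_add]
  constructor
  · intro hq
    obtain ⟨w, hw, q', hq', rfl⟩ := hsum q
    exact ⟨w, hw, q', hq', (hχ w hw q').symm ▸ hq, rfl⟩
  · rintro ⟨w, hw, q', -, hq', rfl⟩
    rwa [hχ w hw]

end AddMonoidHom

section CompactGeneration

variable {Q M : Type*} [AddCommGroup M] (ρ : Q → M ≃+ M)

def IsCompactlyGeneratedOver [TopologicalSpace M] (P : Set Q) : Prop :=
  ∃ K : Set M, IsCompact K ∧ ∀ N : AddSubgroup M, IsClosed (N : Set M) → K ⊆ N →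
    (∀ q ∈ P, ∀ x ∈ N, ρ q x ∈ N) → N = ⊤

def AddSubgroup.actionCore (S : Set Q) (N : AddSubgroup M) : AddSubgroup M :=
  ⨅ s ∈ S, N.comap (ρ s).toAddMonoidHom

variable {ρ}

theorem AddSubgroup.mem_actionCore {S : Set Q} {N : AddSubgroup M} {x : M} :
    x ∈ AddSubgroup.actionCore ρ S N ↔ ∀ s ∈ S, ρ s x ∈ N := by
  simp [AddSubgroup.actionCore]

theorem AddSubgroup.isClosed_actionCore [TopologicalSpace M] (hρ : ∀ q, Continuous (ρ q))
    (S : Set Q) {N : AddSubgroup M} (hN : IsClosed (N : Set M)) :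
    IsClosed (AddSubgroup.actionCore ρ S N : Set M) := by
  have hcore : (AddSubgroup.actionCore ρ S N : Set M) = ⋂ s ∈ S, ρ s ⁻¹' N := by
    ext x
    simp [AddSubgroup.mem_actionCore]
  rw [hcore]
  exact isClosed_biInter fun s _ => hN.preimage (hρ s)

theorem AddSubgroup.actionCore_le [Zero Q] (hρ0 : ∀ x : M, ρ 0 x = x) {S : Set Q} (hS : 0 ∈ S)
    (N : AddSubgroup M) : AddSubgroup.actionCore ρ S N ≤ N := fun x hx => by
  simpa [hρ0] using AddSubgroup.mem_actionCore.mp hx 0 hS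

theorem AddSubgroup.apply_mem_actionCore [AddCommMonoid Q]
    (hρadd : ∀ a b : Q, ∀ x : M, ρ (a + b) x = ρ a (ρ b x))
    {W : AddSubmonoid Q} {P' : Set Q} {N : AddSubgroup M} (hN : ∀ q ∈ P', ∀ x ∈ N, ρ q x ∈ N)
    {w₀ q' : Q} (hw₀ : w₀ ∈ W) (hq' : q' ∈ P') {x : M}
    (hx : x ∈ AddSubgroup.actionCore ρ W N) :
    ρ (w₀ + q') x ∈ AddSubgroup.actionCore ρ W N := by
  refine AddSubgroup.mem_actionCore.mpr fun w hw => ?_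
  have hcomm : ρ w (ρ (w₀ + q') x) = ρ q' (ρ (w + w₀) x) := by
    rw [← hρadd, ← hρadd, add_comm q', add_assoc]
  rw [hcomm]
  exact hN q' hq' _ (AddSubgroup.mem_actionCore.mp hx _ (W.add_mem hw hw₀))

theorem IsCompactlyGeneratedOver.of_subset_add [AddCommMonoid Q] [TopologicalSpace Q]
    [TopologicalSpace M] (hρ0 : ∀ x : M, ρ 0 x = x)
    (hρadd : ∀ a b : Q, ∀ x : M, ρ (a + b) x = ρ a (ρ b x))
    (hρcont : Continuous fun p : Q × M => ρ p.1 p.2) {W : AddSubmonoid Q}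
    (hW : IsCompact (W : Set Q)) {P P' : Set Q} (hP : ∀ q ∈ P, ∃ w ∈ W, ∃ q' ∈ P', q = w + q')
    (h : IsCompactlyGeneratedOver ρ P) : IsCompactlyGeneratedOver ρ P' := by
  obtain ⟨K, hK, hgen⟩ := h
  refine ⟨(fun p : Q × M => ρ p.1 p.2) '' ((W : Set Q) ×ˢ K), (hW.prod hK).image hρcont, ?_⟩
  intro N hN hWKN hinv
  have hρ : ∀ q, Continuous (ρ q) := fun q => hρcont.comp (Continuous.prodMk_right q)
  have hKcore : K ⊆ AddSubgroup.actionCore ρ W N := fun x hx =>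
    AddSubgroup.mem_actionCore.mpr fun w hw => hWKN ⟨(w, x), ⟨hw, hx⟩, rfl⟩
  have hcore_inv : ∀ q ∈ P, ∀ x ∈ AddSubgroup.actionCore ρ W N,
      ρ q x ∈ AddSubgroup.actionCore ρ W N := by
    intro q hq x hx
    obtain ⟨w₀, hw₀, q', hq', rfl⟩ := hP q hq
    exact AddSubgroup.apply_mem_actionCore hρadd hinv hw₀ hq' hx
  have hcore_top := hgen _ (AddSubgroup.isClosed_actionCore hρ W hN) hKcore hcore_inv
  exact top_le_iff.mp (hcore_top ▸ AddSubgroup.actionCore_le hρ0 W.zero_mem N)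

end CompactGeneration

theorem stmt11_general {Q : Type*} [AddCommGroup Q] [TopologicalSpace Q]
    (W Q' : AddSubgroup Q)
    (hWc : IsCompact (W : Set Q))
    (hsum : ∀ q : Q, ∃ w ∈ W, ∃ q' ∈ Q', q = w + q')
    (χ : Q →+ ℝ) (hχ : Continuous χ)
    {M : Type*} [AddCommGroup M] [TopologicalSpace M]
    (ρ : Q → M ≃+ M) (hρ0 : ∀ x : M, ρ 0 x = x)
    (hρadd : ∀ a b : Q, ∀ x : M, ρ (a + b) x = ρ a (ρ b x))
    (hρcont : Continuous fun p : Q × M => ρ p.1 p.2) :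
    (∀ q : Q, 0 ≤ χ q ↔ ∃ w ∈ W, ∃ q' ∈ Q', 0 ≤ χ q' ∧ q = w + q') ∧
    ((∃ K : Set M, IsCompact K ∧ ∀ N : AddSubgroup M, IsClosed (N : Set M) → K ⊆ N →
        (∀ q : Q, 0 ≤ χ q → ∀ x ∈ N, ρ q x ∈ N) → N = ⊤) →
      ∃ K : Set M, IsCompact K ∧ ∀ N : AddSubgroup M, IsClosed (N : Set M) → K ⊆ N →
        (∀ q ∈ Q', 0 ≤ χ q → ∀ x ∈ N, ρ q x ∈ N) → N = ⊤) := by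
  have hdecomp := χ.nonneg_iff_exists_add_of_le_ker (χ.le_ker_of_isCompact hχ hWc) hsum
  refine ⟨hdecomp, fun hgen => ?_⟩
  have hsplit : ∀ q ∈ {q | 0 ≤ χ q}, ∃ w ∈ W.toAddSubmonoid, ∃ q' ∈ {q | q ∈ Q' ∧ 0 ≤ χ q},
      q = w + q' := fun q hq => by
    obtain ⟨w, hw, q', hq', hχq', rfl⟩ := (hdecomp q).mp hq
    exact ⟨w, hw, q', ⟨hq', hχq'⟩, rfl⟩
  obtain ⟨K, hK, hK'⟩ := IsCompactlyGeneratedOver.of_subset_add hρ0 hρadd hρcont hWc hsplit hgen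
  exact ⟨K, hK, fun N hN hKN hinv => hK' N hN hKN fun q hq => hinv q hq.1 hq.2⟩

/-- let `Q` be a locally compact abelian group, `W, Q'` closed subgroups
with `W` compact and `Q = W + Q'`, and `χ : Q → ℝ` a continuous homomorphism. Then
`Q_χ = Q'_χ + W`, and every locally compact `Q`-module `M` that is compactly generated
as a `Q_χ`-module is compactly generated as a `Q'_χ`-module. (Compact generation over a
submonoid `P`: there is a compact `K ⊆ M` such that the only closed `P`-invariant subgroup
containing `K` is `M` itself.) -/
theorem stmt11 {Q : Type*} [AddCommGroup Q] [TopologicalSpace Q] [IsTopologicalAddGroup Q]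
    [LocallyCompactSpace Q]
    (W Q' : AddSubgroup Q) (hWcl : IsClosed (W : Set Q)) (hQ'cl : IsClosed (Q' : Set Q))
    (hWc : IsCompact (W : Set Q))
    (hsum : ∀ q : Q, ∃ w ∈ W, ∃ q' ∈ Q', q = w + q')
    (χ : Q →+ ℝ) (hχ : Continuous χ)
    {M : Type*} [AddCommGroup M] [TopologicalSpace M] [IsTopologicalAddGroup M]
    [LocallyCompactSpace M]
    (ρ : Q → M ≃+ M) (hρ0 : ∀ x : M, ρ 0 x = x)
    (hρadd : ∀ a b : Q, ∀ x : M, ρ (a + b) x = ρ a (ρ b x))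
    (hρcont : Continuous fun p : Q × M => ρ p.1 p.2) :
    (∀ q : Q, 0 ≤ χ q ↔ ∃ w ∈ W, ∃ q' ∈ Q', 0 ≤ χ q' ∧ q = w + q') ∧
    ((∃ K : Set M, IsCompact K ∧ ∀ N : AddSubgroup M, IsClosed (N : Set M) → K ⊆ N →
        (∀ q : Q, 0 ≤ χ q → ∀ x ∈ N, ρ q x ∈ N) → N = ⊤) →
      ∃ K : Set M, IsCompact K ∧ ∀ N : AddSubgroup M, IsClosed (N : Set M) → K ⊆ N →
        (∀ q ∈ Q', 0 ≤ χ q → ∀ x ∈ N, ρ q x ∈ N) → N = ⊤) :=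
  stmt11_general W Q' hWc hsum χ hχ ρ hρ0 hρadd hρcont
end

section
/- Let 𝐊 be a nondiscrete locally compact field, A a group, and i : A → 𝐊* a homomorphism whose image is not contained in the group of norm-1 elements and such that the closed additive subgroup generated by i(A) equals 𝐊. Then 𝐊, as an A-module via multiplication by i, is topologically simple (its only closed A-submodules are {0} and 𝐊) and there exists α ∈ A acting as a contracting automorphism of the additive group of 𝐊. -/
open Filter Topology

/-- let `𝐊` be a nondiscrete locally compact (normed) field, `A` a group, and
`i : A → 𝐊ˣ` a homomorphism whose image is not contained in the norm-1 elements and such that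
the closed additive subgroup generated by `i(A)` is all of `𝐊`. Then `𝐊`, as an `A`-module via
multiplication, is topologically simple, and some `α ∈ A` acts as a contracting automorphism
of the additive group of `𝐊`. -/
theorem stmt12 {K : Type*} [NontriviallyNormedField K] [LocallyCompactSpace K]
    {A : Type*} [Group A] (i : A →* Kˣ)
    (hnorm : ∃ a : A, ‖((i a : Kˣ) : K)‖ ≠ 1)
    (hgen : ∀ N : AddSubgroup K, IsClosed (N : Set K) →
      (∀ a : A, ((i a : Kˣ) : K) ∈ N) → N = ⊤) :
    (∀ N : AddSubgroup K, IsClosed (N : Set K) →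
      (∀ a : A, ∀ x ∈ N, ((i a : Kˣ) : K) * x ∈ N) → N = ⊥ ∨ N = ⊤) ∧
    (∃ α : A, ∀ C : Set K, IsCompact C → ∀ U ∈ 𝓝 (0 : K),
      ∀ᶠ n : ℕ in atTop, ∀ x ∈ C, ((i α : Kˣ) : K) ^ n * x ∈ U) := by
  constructor
  · intro N hclosed hinv
    by_cases hN : N = ⊥
    · exact Or.inl hN
    · right
      obtain ⟨x, hxN, hx0⟩ : ∃ x ∈ N, x ≠ 0 := by
        by_contra h
        push_neg at h
        refine hN (AddSubgroup.ext fun y => ?_)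
        simp only [AddSubgroup.mem_bot]
        exact ⟨h y, fun hy => hy ▸ N.zero_mem⟩
      set M : AddSubgroup K := N.comap (AddMonoidHom.mulLeft x) with hM
      have hMclosed : IsClosed (M : Set K) :=
        hclosed.preimage (continuous_const.mul continuous_id)
      have hMmem : ∀ a : A, ((i a : Kˣ) : K) ∈ M := by
        intro a
        have := hinv a x hxN
        simpa [M, AddSubgroup.mem_comap, mul_comm] using this
      have hMtop := hgen M hMclosed hMmem
      have : ∀ y : K, x * y ∈ N := by
        intro y
        have : y ∈ M := hMtop ▸ AddSubgroup.mem_top y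
        simpa [M, AddSubgroup.mem_comap] using this
      ext z
      simp only [AddSubgroup.mem_top, iff_true]
      have := this (x⁻¹ * z)
      rwa [← mul_assoc, mul_inv_cancel₀ hx0, one_mul] at this
  · obtain ⟨a, ha⟩ := hnorm
    have hpos : (0:ℝ) < ‖((i a : Kˣ) : K)‖ := by
      exact norm_pos_iff.mpr (i a).ne_zero
    obtain ⟨α, hα⟩ : ∃ α : A, ‖((i α : Kˣ) : K)‖ < 1 := by
      rcases lt_or_gt_of_ne ha with h | h
      · exact ⟨a, h⟩
      · refine ⟨a⁻¹, ?_⟩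
        have : ((i a⁻¹ : Kˣ) : K) = (((i a : Kˣ) : K))⁻¹ := by
          simp [map_inv]
        rw [this, norm_inv]
        exact inv_lt_one_of_one_lt₀ h
    refine ⟨α, fun C hC U hU => ?_⟩
    obtain ⟨R, hR⟩ : ∃ R : ℝ, ∀ x ∈ C, ‖x‖ ≤ R := by
      obtain ⟨R, hR⟩ := hC.isBounded.subset_closedBall 0
      exact ⟨R, fun x hx => by simpa using hR hx⟩
    obtain ⟨ε, hε, hball⟩ := Metric.mem_nhds_iff.mp hU
    have htend : Tendsto (fun n : ℕ => ‖((i α : Kˣ) : K)‖ ^ n * (R + 1)) atTop (𝓝 0) := by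
      have := tendsto_pow_atTop_nhds_zero_of_lt_one (norm_nonneg _) hα
      simpa using this.mul_const (R + 1)
    have hev : ∀ᶠ n : ℕ in atTop, ‖((i α : Kˣ) : K)‖ ^ n * (R + 1) < ε :=
      (htend.eventually (gt_mem_nhds hε))
    filter_upwards [hev] with n hn x hx
    apply hball
    simp only [Metric.mem_ball, dist_zero_right]
    calc ‖((i α : Kˣ) : K) ^ n * x‖ = ‖((i α : Kˣ) : K)‖ ^ n * ‖x‖ := by
          rw [norm_mul, norm_pow]
      _ ≤ ‖((i α : Kˣ) : K)‖ ^ n * (R + 1) := by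
          apply mul_le_mul_of_nonneg_left _ (by positivity)
          exact le_trans (hR x hx) (by linarith)
      _ < ε := hn
end

section
/- For a prime p and n ≥ 1, the ring R_n = (ℤ/pⁿℤ)((t)) of formal Laurent series over ℤ/pⁿℤ is a local principal ideal ring whose ideals are exactly (p^k) for 0 ≤ k ≤ n. In particular, every element of R_n can be written as p^k·z with k ≥ 0 and z a unit, and every y ∈ R_n ∖ pR_n is invertible or of the form t^k·(unit). -/
open HahnSeries

namespace Stmt13Aux

variable {Γ : Type*} [AddCommMonoid Γ] [PartialOrder Γ] [IsOrderedCancelAddMonoid Γ]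

/-- coefficientwise map of Hahn series along a zero-preserving function -/
noncomputable def cmap {R S : Type*} [Zero R] [Zero S] (f : R → S) (hf : f 0 = 0)
    (x : HahnSeries Γ R) : HahnSeries Γ S where
  coeff m := f (x.coeff m)
  isPWO_support' := x.isPWO_support.mono (fun m hm => by
    simp only [Function.mem_support] at hm ⊢
    intro h; exact hm (by rw [h, hf]))

@[simp] lemma cmap_coeff {R S : Type*} [Zero R] [Zero S] (f : R → S) (hf : f 0 = 0)
    (x : HahnSeries Γ R) (m : Γ) : (cmap f hf x).coeff m = f (x.coeff m) := rfl

lemma cmap_support_subset {R S : Type*} [Zero R] [Zero S] (f : R → S) (hf : f 0 = 0)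
    (x : HahnSeries Γ R) : (cmap f hf x).support ⊆ x.support := fun m hm => by
  simp only [HahnSeries.mem_support, cmap_coeff] at hm ⊢
  intro h; exact hm (by rw [h, hf])

lemma cmap_mul {R S : Type*} [CommRing R] [CommRing S] (f : R →+* S)
    (x y : HahnSeries Γ R) :
    cmap f f.map_zero (x * y) = cmap f f.map_zero x * cmap f f.map_zero y := by
  ext a
  have h1 : f ((x*y).coeff a) = ∑ ij ∈ Finset.antidiagonal x.isPWO_support
      y.isPWO_support a, f (x.coeff ij.1) * f (y.coeff ij.2) := by
    rw [HahnSeries.coeff_mul, map_sum f _ _]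
    exact Finset.sum_congr rfl fun ij _ => map_mul f _ _
  rw [cmap_coeff, h1,
    HahnSeries.coeff_mul_left' x.isPWO_support (cmap_support_subset f f.map_zero x)]
  refine (Finset.sum_subset ?_ ?_).symm
  · intro ij hij
    rw [Finset.mem_addAntidiagonal] at hij ⊢
    exact ⟨hij.1, cmap_support_subset f f.map_zero y hij.2.1, hij.2.2⟩
  · intro ij hij hij'
    rw [Finset.mem_addAntidiagonal] at hij hij'
    have h2 : (cmap (⇑f) f.map_zero y).coeff ij.2 = 0 := by
      by_contra h
      exact hij' ⟨hij.1, h, hij.2.2⟩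
    show (cmap (⇑f) f.map_zero x).coeff ij.1 * (cmap (⇑f) f.map_zero y).coeff ij.2 = 0
    rw [h2, mul_zero]

lemma cmap_one {R S : Type*} [CommRing R] [CommRing S] (f : R →+* S) :
    cmap (⇑f) f.map_zero (1 : HahnSeries Γ R) = 1 := by
  ext a
  rw [cmap_coeff]
  rcases eq_or_ne a 0 with rfl | h
  · simp
  · simp [HahnSeries.coeff_one, h]

lemma cmap_sub {R S : Type*} [CommRing R] [CommRing S] (f : R →+* S)
    (x y : HahnSeries Γ R) :
    cmap (⇑f) f.map_zero (x - y) = cmap (⇑f) f.map_zero x - cmap (⇑f) f.map_zero y := by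
  ext a
  simp [map_sub]

lemma natCast_mul_coeff {R : Type*} [CommRing R] (q : ℕ) (z : HahnSeries Γ R) (m : Γ) :
    ((q : HahnSeries Γ R) * z).coeff m = (q : R) * z.coeff m := by
  rw [← map_natCast (HahnSeries.C : R →+* HahnSeries Γ R) q, HahnSeries.C_apply,
    single_zero_mul_eq_smul, HahnSeries.coeff_smul, smul_eq_mul]

section main

variable {p n : ℕ} (hp : p.Prime) (hn : 1 ≤ n)
include hp hn

/-- reduction map on coefficients -/
noncomputable abbrev rmap (hp : p.Prime) (hn : 1 ≤ n) : ZMod (p ^ n) →+* ZMod p :=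
  ZMod.castHom (dvd_pow_self p (Nat.one_le_iff_ne_zero.mp hn)) (ZMod p)

lemma dvd_of_rmap_eq_zero (a : ZMod (p ^ n)) (h : rmap hp hn a = 0) :
    ∃ b, a = (p : ZMod (p ^ n)) * b := by
  haveI : NeZero p := ⟨hp.ne_zero⟩
  haveI : NeZero (p ^ n) := ⟨pow_ne_zero n hp.ne_zero⟩
  have ha : ((a.val : ℕ) : ZMod (p ^ n)) = a := ZMod.natCast_rightInverse a
  have h2 : ((a.val : ℕ) : ZMod p) = 0 := by
    rw [← map_natCast (rmap hp hn) a.val, ha, h]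
  obtain ⟨c, hc⟩ := (ZMod.natCast_eq_zero_iff a.val p).mp h2
  exact ⟨(c : ZMod (p ^ n)), by rw [← ha, hc, Nat.cast_mul]⟩

lemma exists_of_cmap_eq_zero (x : LaurentSeries (ZMod (p ^ n)))
    (h : cmap (⇑(rmap hp hn)) (rmap hp hn).map_zero x = 0) :
    ∃ z : LaurentSeries (ZMod (p ^ n)), x = (p : LaurentSeries (ZMod (p ^ n))) * z := by
  have hc : ∀ m : ℤ, ∃ b : ZMod (p ^ n),
      x.coeff m = (p : ZMod (p ^ n)) * b ∧ (x.coeff m = 0 → b = 0) := by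
    intro m
    rcases eq_or_ne (x.coeff m) 0 with h0 | h0
    · exact ⟨0, by simp [h0], fun _ => rfl⟩
    · have hm : rmap hp hn (x.coeff m) = 0 := by
        have := congrArg (fun w : LaurentSeries (ZMod p) => w.coeff m) h
        simpa using this
      obtain ⟨b, hb⟩ := dvd_of_rmap_eq_zero hp hn (x.coeff m) hm
      exact ⟨b, hb, fun h' => absurd h' h0⟩
  choose g hg1 hg2 using hc
  refine ⟨⟨g, x.isPWO_support.mono fun m hm => ?_⟩, ?_⟩
  · simp only [Function.mem_support] at hm ⊢
    intro h0; exact hm (hg2 m h0)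
  · ext m
    rw [natCast_mul_coeff]
    exact hg1 m

omit hp hn in
lemma pow_p_zero : (p : LaurentSeries (ZMod (p ^ n))) ^ n = 0 := by
  have h : ((p ^ n : ℕ) : LaurentSeries (ZMod (p ^ n))) = 0 := by
    rw [← map_natCast (HahnSeries.C : ZMod (p ^ n) →+* LaurentSeries (ZMod (p ^ n))) (p ^ n),
      ZMod.natCast_self, map_zero]
  rw [Nat.cast_pow] at h
  exact h

lemma mem_span_p_of_cmap_eq_zero (x : LaurentSeries (ZMod (p ^ n)))
    (h : cmap (⇑(rmap hp hn)) (rmap hp hn).map_zero x = 0) :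
    x ∈ Ideal.span {(p : LaurentSeries (ZMod (p ^ n)))} := by
  obtain ⟨z, hz⟩ := exists_of_cmap_eq_zero hp hn x h
  exact Ideal.mem_span_singleton.mpr ⟨z, hz⟩

lemma isUnit_of_notMem_span (y : LaurentSeries (ZMod (p ^ n)))
    (h : y ∉ Ideal.span {(p : LaurentSeries (ZMod (p ^ n)))}) : IsUnit y := by
  haveI : Fact p.Prime := ⟨hp⟩
  haveI : NeZero p := ⟨hp.ne_zero⟩
  set f := rmap hp hn
  have hfy : cmap (⇑f) f.map_zero y ≠ 0 := fun h0 =>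
    h (mem_span_p_of_cmap_eq_zero hp hn y h0)
  -- lift the inverse of the image
  set v : LaurentSeries (ZMod p) := (cmap (⇑f) f.map_zero y)⁻¹ with hv
  have hlz : ((((0 : ZMod p)).val : ℕ) : ZMod (p ^ n)) = 0 := by simp
  set w : LaurentSeries (ZMod (p ^ n)) :=
    cmap (fun b : ZMod p => ((b.val : ℕ) : ZMod (p ^ n))) hlz v with hw
  have hfw : cmap (⇑f) f.map_zero w = v := by
    ext m
    rw [hw, cmap_coeff, cmap_coeff, map_natCast f]
    exact ZMod.natCast_rightInverse (v.coeff m)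
  have hmul : cmap (⇑f) f.map_zero (y * w) = 1 := by
    rw [cmap_mul, hfw, hv, mul_inv_cancel₀ hfy]
  have hker : cmap (⇑f) f.map_zero (y * w - 1) = 0 := by
    rw [cmap_sub, hmul, cmap_one, sub_self]
  obtain ⟨c, hc⟩ := exists_of_cmap_eq_zero hp hn _ hker
  have hnil : IsNilpotent (y * w - 1) := by
    refine ⟨n, ?_⟩
    rw [hc, mul_pow, pow_p_zero, zero_mul]
  have hyw : IsUnit (y * w) := by
    have := hnil.isUnit_one_add
    rwa [add_sub_cancel] at this
  exact isUnit_of_mul_isUnit_left hyw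

lemma p_pow_mul_unit (y : LaurentSeries (ZMod (p ^ n))) :
    ∃ k ≤ n, ∃ z : (LaurentSeries (ZMod (p ^ n)))ˣ,
      y = (p : LaurentSeries (ZMod (p ^ n))) ^ k * z := by
  classical
  rcases eq_or_ne y 0 with rfl | hy
  · exact ⟨n, le_rfl, 1, by rw [pow_p_zero, zero_mul]⟩
  set P : ℕ → Prop := fun k => ∃ z, y = (p : LaurentSeries (ZMod (p ^ n))) ^ k * z with hP
  have hP0 : P 0 := ⟨y, by rw [pow_zero, one_mul]⟩
  set k := Nat.findGreatest P n with hk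
  have hPk : P k := Nat.findGreatest_spec (Nat.zero_le n) hP0
  obtain ⟨z, hz⟩ := hPk
  have hkn : k ≤ n := Nat.findGreatest_le n
  have hklt : k < n := by
    rcases lt_or_eq_of_le hkn with h | h
    · exact h
    · exfalso; apply hy; rw [hz, h, pow_p_zero, zero_mul]
  have hzn : z ∉ Ideal.span {(p : LaurentSeries (ZMod (p ^ n)))} := by
    intro hmem
    obtain ⟨c, hc⟩ := Ideal.mem_span_singleton.mp hmem
    have : P (k + 1) := ⟨c, by rw [hz, hc, pow_succ, mul_assoc]⟩
    exact Nat.findGreatest_is_greatest (Nat.lt_succ_self k) (Nat.succ_le_of_lt hklt) this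
  have hu : IsUnit z := isUnit_of_notMem_span hp hn z hzn
  exact ⟨k, hkn, hu.unit, by rw [hz, IsUnit.unit_spec]⟩

end main

end Stmt13Aux

open Stmt13Aux in
/-- for a prime `p` and `n ≥ 1`, the ring `Rₙ = (ℤ/pⁿℤ)((t))` of formal
Laurent series is a local ring whose ideals are exactly the `(p^k)` for `0 ≤ k ≤ n`;
every element is `p^k` times a unit, and every element not in `pRₙ` is `t^k` times a unit. -/
theorem stmt13 (p n : ℕ) (hp : p.Prime) (hn : 1 ≤ n) :
    IsLocalRing (LaurentSeries (ZMod (p ^ n))) ∧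
    (∀ I : Ideal (LaurentSeries (ZMod (p ^ n))),
      ∃ k ≤ n, I = Ideal.span {(p : LaurentSeries (ZMod (p ^ n))) ^ k}) ∧
    (∀ y : LaurentSeries (ZMod (p ^ n)),
      ∃ (k : ℕ) (z : (LaurentSeries (ZMod (p ^ n)))ˣ),
        y = (p : LaurentSeries (ZMod (p ^ n))) ^ k * z) ∧
    (∀ y : LaurentSeries (ZMod (p ^ n)),
      y ∉ Ideal.span {(p : LaurentSeries (ZMod (p ^ n)))} →
      ∃ (k : ℤ) (z : (LaurentSeries (ZMod (p ^ n)))ˣ),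
        y = (HahnSeries.single k (1 : ZMod (p ^ n))) * z) := by
  haveI : Fact (1 < p ^ n) := ⟨Nat.one_lt_pow (Nat.one_le_iff_ne_zero.mp hn) hp.one_lt⟩
  haveI : Fact p.Prime := ⟨hp⟩
  refine ⟨?_, ?_, ?_, ?_⟩
  · -- local ring
    refine IsLocalRing.of_isUnit_or_isUnit_one_sub_self fun a => ?_
    by_cases ha : a ∈ Ideal.span {(p : LaurentSeries (ZMod (p ^ n)))}
    · right
      refine isUnit_of_notMem_span hp hn _ fun h1 => ?_
      have : (1 : LaurentSeries (ZMod (p ^ n))) ∈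
          Ideal.span {(p : LaurentSeries (ZMod (p ^ n)))} := by
        have := Ideal.add_mem _ ha h1
        rwa [add_sub_cancel] at this
      obtain ⟨c, hc⟩ := Ideal.mem_span_singleton.mp this
      have h0 : cmap (⇑(rmap hp hn)) (rmap hp hn).map_zero
          (1 : LaurentSeries (ZMod (p ^ n))) = 0 := by
        rw [hc, cmap_mul]
        have hcp : cmap (⇑(rmap hp hn)) (rmap hp hn).map_zero
            ((p : ℕ) : LaurentSeries (ZMod (p ^ n))) = 0 := by
          ext m
          rw [cmap_coeff, HahnSeries.coeff_zero,
            show ((p : ℕ) : LaurentSeries (ZMod (p ^ n))) =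
              HahnSeries.C ((p : ℕ) : ZMod (p ^ n)) from
              (map_natCast (HahnSeries.C : ZMod (p ^ n) →+* LaurentSeries (ZMod (p ^ n))) p).symm,
            HahnSeries.C_apply]
          rcases eq_or_ne m 0 with rfl | hm
          · rw [HahnSeries.coeff_single_same, map_natCast (rmap hp hn) p, ZMod.natCast_self]
          · rw [HahnSeries.coeff_single_of_ne hm, map_zero]
        rw [hcp, zero_mul]
      rw [cmap_one] at h0
      exact one_ne_zero h0
    · exact Or.inl (isUnit_of_notMem_span hp hn a ha)
  · -- ideals
    intro I
    have hTn : (p : LaurentSeries (ZMod (p ^ n))) ^ n ∈ I := by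
      rw [pow_p_zero]; exact I.zero_mem
    set T : Set ℕ := {k | (p : LaurentSeries (ZMod (p ^ n))) ^ k ∈ I} with hT
    have hne : T.Nonempty := ⟨n, hTn⟩
    refine ⟨sInf T, Nat.sInf_le hTn, ?_⟩
    have hkI : (p : LaurentSeries (ZMod (p ^ n))) ^ (sInf T) ∈ I := Nat.sInf_mem hne
    refine le_antisymm ?_ ?_
    · intro y hy
      obtain ⟨j, _, u, rfl⟩ := p_pow_mul_unit hp hn y
      have hj : (p : LaurentSeries (ZMod (p ^ n))) ^ j ∈ I := by
        have := I.mul_mem_right (↑u⁻¹) hy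
        rwa [mul_assoc, Units.mul_inv, mul_one] at this
      have hkj : sInf T ≤ j := Nat.sInf_le hj
      refine Ideal.mem_span_singleton.mpr
        ⟨(p : LaurentSeries (ZMod (p ^ n))) ^ (j - sInf T) * u, ?_⟩
      rw [← mul_assoc, ← _root_.pow_add, Nat.add_sub_cancel' hkj]
    · rw [Ideal.span_le, Set.singleton_subset_iff]
      exact hkI
  · -- p^k times unit
    intro y
    obtain ⟨k, _, z, hz⟩ := p_pow_mul_unit hp hn y
    exact ⟨k, z, hz⟩
  · -- not in pR: unit
    intro y hy
    have hu := isUnit_of_notMem_span hp hn y hy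
    refine ⟨0, hu.unit, ?_⟩
    rw [HahnSeries.single_zero_one, one_mul, hu.unit_spec]
end

section
/- Let A be a group and M an amorphic locally compact A-module, that is, M has a compact open A-submodule Ω such that Ω is profinite as a module (inverse limit of finite modules) and M/Ω is a locally finite discrete module (every element generates a finite submodule). Then every closed A-submodule N of M is amorphic: N ∩ Ω is profinite and N/(N ∩ Ω) is discrete locally finite. -/
open Filter Topology Pointwise

/-! Everything restricts from `M` to `N`: `N ∩ Ω` is a closed subset of a compact set; the
`N ∩ V`, for the open invariant `V ≤ Ω`, are relatively open and invariant; and `N ∩ L`, for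
an invariant `L` covered by finitely many cosets of `Ω`, is covered by finitely many cosets of
`N ∩ Ω`, obtained by choosing a representative in `N ∩ L` of every coset of `Ω` meeting it. -/

theorem AddSubgroup.exists_finset_subset_add_inf {G : Type*} [AddGroup G] {S : Set G}
    {N K : AddSubgroup G} {F : Finset G} (hSN : S ⊆ N) (hS : S ⊆ ↑F + (K : Set G)) :
    ∃ F' : Finset G, S ⊆ ↑F' + ((N ⊓ K : AddSubgroup G) : Set G) := by
  have hrep : ∀ f : G, ∃ r : G, (∃ s ∈ S, -f + s ∈ K) → r ∈ S ∧ -f + r ∈ K := fun f => by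
    by_cases h : ∃ s ∈ S, -f + s ∈ K
    · obtain ⟨s, hs, hfs⟩ := h
      exact ⟨s, fun _ => ⟨hs, hfs⟩⟩
    · exact ⟨0, fun h' => absurd h' h⟩
  choose r hr using hrep
  classical
  refine ⟨F.image r, fun s hs => ?_⟩
  obtain ⟨f, hf, k, hk, rfl⟩ := Set.mem_add.1 (hS hs)
  obtain ⟨hrS, hrK⟩ := hr f ⟨f + k, hs, by simpa using hk⟩
  refine Set.mem_add.2 ⟨r f, Finset.mem_coe.2 (Finset.mem_image_of_mem r hf),
    -r f + (f + k), ⟨N.add_mem (N.neg_mem (hSN hrS)) (hSN hs), ?_⟩, add_neg_cancel_left _ _⟩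
  have hdiff : -r f + (f + k) = -(-f + r f) + k := by
    simp only [neg_add_rev, neg_neg, add_assoc]
  rw [hdiff]
  exact K.add_mem (K.neg_mem hrK) hk

theorem stmt16_general {A : Type*} {M : Type*} [AddCommGroup M] [TopologicalSpace M]
    (φ : A → M ≃+ M)
    (Ω : AddSubgroup M) (hΩc : IsCompact (Ω : Set M))
    (hprof : ∀ U ∈ 𝓝 (0 : M), ∃ V : AddSubgroup M, V ≤ Ω ∧ IsOpen (V : Set M) ∧
      (V : Set M) ⊆ U ∧ ∀ a : A, ∀ x ∈ V, φ a x ∈ V)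
    (hlf : ∀ x : M, ∃ L : AddSubgroup M, Ω ≤ L ∧ x ∈ L ∧
      (∀ a : A, ∀ y ∈ L, φ a y ∈ L) ∧ ∃ F : Finset M, (L : Set M) ⊆ ↑F + (Ω : Set M))
    (N : AddSubgroup M) (hNcl : IsClosed (N : Set M))
    (hNinv : ∀ a : A, ∀ x ∈ N, φ a x ∈ N) :
    IsCompact ((N ⊓ Ω : AddSubgroup M) : Set M) ∧
    (∀ U ∈ 𝓝 (0 : M), ∃ V : AddSubgroup M, V ≤ N ⊓ Ω ∧ (V : Set M) ⊆ U ∧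
      (∀ a : A, ∀ x ∈ V, φ a x ∈ V) ∧
      ∃ W : Set M, IsOpen W ∧ (V : Set M) = ((N ⊓ Ω : AddSubgroup M) : Set M) ∩ W) ∧
    (∀ x ∈ N, ∃ L : AddSubgroup M, L ≤ N ∧ N ⊓ Ω ≤ L ∧ x ∈ L ∧
      (∀ a : A, ∀ y ∈ L, φ a y ∈ L) ∧
      ∃ F : Finset M, (L : Set M) ⊆ ↑F + ((N ⊓ Ω : AddSubgroup M) : Set M)) := by
  refine ⟨hΩc.inter_left hNcl, fun U hU => ?_, fun x hx => ?_⟩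
  · obtain ⟨V, hVΩ, hVo, hVU, hVinv⟩ := hprof U hU
    refine ⟨N ⊓ V, inf_le_inf_left N hVΩ, fun y hy => hVU hy.2,
      fun a y hy => ⟨hNinv a y hy.1, hVinv a y hy.2⟩, V, hVo, ?_⟩
    change (N : Set M) ∩ V = ((N : Set M) ∩ Ω) ∩ V
    rw [Set.inter_assoc, Set.inter_eq_right.2 hVΩ]
  · obtain ⟨L, hΩL, hxL, hLinv, F, hF⟩ := hlf x
    obtain ⟨F', hF'⟩ := AddSubgroup.exists_finset_subset_add_inf (S := (N ⊓ L : AddSubgroup M))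
      (fun y hy => hy.1) (fun y hy => hF hy.2)
    exact ⟨N ⊓ L, inf_le_left, inf_le_inf_left N hΩL, ⟨hx, hxL⟩,
      fun a y hy => ⟨hNinv a y hy.1, hLinv a y hy.2⟩, F', hF'⟩

/-- let a group `A` act on a locally compact abelian group `M` by topological
automorphisms, and suppose `M` is amorphic: it has a compact open invariant subgroup `Ω`
that is profinite as a module (open invariant submodules form a basis at `0`) and such that
`M/Ω` is locally finite as a module (every element lies in an invariant subgroup covered by
finitely many cosets of `Ω`). Then every closed invariant subgroup `N` is amorphic:
`N ∩ Ω` is profinite (relatively open invariant submodules form a basis at `0`) and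
`N/(N ∩ Ω)` is discrete locally finite. -/
theorem stmt16 {A : Type*} [Group A] {M : Type*} [AddCommGroup M] [TopologicalSpace M]
    [IsTopologicalAddGroup M] [LocallyCompactSpace M]
    (φ : A → M ≃+ M) (hφc : ∀ a, Continuous (φ a)) (hφc' : ∀ a, Continuous (φ a).symm)
    (hφm : ∀ a b : A, ∀ x : M, φ (a * b) x = φ a (φ b x))
    (Ω : AddSubgroup M) (hΩo : IsOpen (Ω : Set M)) (hΩc : IsCompact (Ω : Set M))
    (hΩinv : ∀ a : A, ∀ x ∈ Ω, φ a x ∈ Ω)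
    (hprof : ∀ U ∈ 𝓝 (0 : M), ∃ V : AddSubgroup M, V ≤ Ω ∧ IsOpen (V : Set M) ∧
      (V : Set M) ⊆ U ∧ ∀ a : A, ∀ x ∈ V, φ a x ∈ V)
    (hlf : ∀ x : M, ∃ L : AddSubgroup M, Ω ≤ L ∧ x ∈ L ∧
      (∀ a : A, ∀ y ∈ L, φ a y ∈ L) ∧ ∃ F : Finset M, (L : Set M) ⊆ ↑F + (Ω : Set M))
    (N : AddSubgroup M) (hNcl : IsClosed (N : Set M))
    (hNinv : ∀ a : A, ∀ x ∈ N, φ a x ∈ N) :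
    IsCompact ((N ⊓ Ω : AddSubgroup M) : Set M) ∧
    (∀ U ∈ 𝓝 (0 : M), ∃ V : AddSubgroup M, V ≤ N ⊓ Ω ∧ (V : Set M) ⊆ U ∧
      (∀ a : A, ∀ x ∈ V, φ a x ∈ V) ∧
      ∃ W : Set M, IsOpen W ∧ (V : Set M) = ((N ⊓ Ω : AddSubgroup M) : Set M) ∩ W) ∧
    (∀ x ∈ N, ∃ L : AddSubgroup M, L ≤ N ∧ N ⊓ Ω ≤ L ∧ x ∈ L ∧
      (∀ a : A, ∀ y ∈ L, φ a y ∈ L) ∧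
      ∃ F : Finset M, (L : Set M) ⊆ ↑F + ((N ⊓ Ω : AddSubgroup M) : Set M)) :=
  stmt16_general φ Ω hΩc hprof hlf N hNcl hNinv
end

section
/- Let M be a locally compact abelian group and α a compacting automorphism, i.e., there is a compact subset Ω ⊆ M with α(Ω) ⊆ Ω and M = ⋃_{n≥0} α^{-n}(Ω). Then every discrete quotient module N of M (by a closed α-invariant subgroup) is locally finite as a ℤ[α^{±1}]-module: every element of N generates a finite α-invariant subgroup. -/
open Function Set

/-!
The image `S` of `Ω` in the discrete quotient is compact, hence finite, and the induced map `β`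
is injective and maps `S` into itself, hence permutes `S`. So `β z ∈ S` forces `z ∈ S`, and since
every element of the quotient has an iterate under `β` landing in `S`, the whole quotient is `S`.
Being finite, it is its own finite `β`-invariant subgroup.
-/

theorem Set.MapsTo.mem_of_iterate_mem_of_injective {X : Type*} {f : X → X} {S : Set X}
    (hmaps : MapsTo f S S) (hS : S.Finite) (hf : Injective f) {n : ℕ} {x : X}
    (hx : f^[n] x ∈ S) : x ∈ S := by
  induction n generalizing x with
  | zero => exact hx
  | succ n ih =>
    have hfx : f x ∈ S := ih (by rwa [← iterate_succ_apply])
    have hsurj : SurjOn f S S :=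
      ((hS.injOn_iff_bijOn_of_mapsTo hmaps).mp hf.injOn).surjOn
    obtain ⟨y, hy, hyx⟩ := hsurj hfx
    rwa [← hf hyx]

theorem QuotientAddGroup.injective_of_semiconj {M : Type*} [AddGroup M] {f : M →+ M}
    {N : AddSubgroup M} [N.Normal] (hN : N.comap f ≤ N) {β : M ⧸ N →+ M ⧸ N}
    (hβ : Semiconj (QuotientAddGroup.mk : M → M ⧸ N) f β) : Injective β := by
  refine (injective_iff_map_eq_zero β).mpr fun z hz => ?_
  induction z using QuotientAddGroup.induction_on with
  | H x =>
    rw [← hβ x, QuotientAddGroup.eq_zero_iff] at hz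
    exact (QuotientAddGroup.eq_zero_iff x).mpr (hN hz)

theorem stmt17_general {M : Type*} [AddCommGroup M] [TopologicalSpace M] [IsTopologicalAddGroup M]
    (α : M ≃+ M)
    (Ω : Set M) (hΩc : IsCompact Ω) (hΩinv : α '' Ω ⊆ Ω)
    (hcover : ∀ x : M, ∃ n : ℕ, (⇑α)^[n] x ∈ Ω)
    (N : AddSubgroup M) (hNo : IsOpen (N : Set M))
    (hNinv : N.map α.toAddMonoidHom = N)
    (β : M ⧸ N →+ M ⧸ N)
    (hβ : ∀ x : M, β (QuotientAddGroup.mk x) = QuotientAddGroup.mk (α x)) :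
    ∀ y : M ⧸ N, ∃ H : AddSubgroup (M ⧸ N),
      y ∈ H ∧ (H : Set (M ⧸ N)).Finite ∧ ∀ z ∈ H, β z ∈ H := by
  have : DiscreteTopology (M ⧸ N) := QuotientAddGroup.discreteTopology hNo
  have hsemi : Semiconj (QuotientAddGroup.mk : M → M ⧸ N) α β := fun x => (hβ x).symm
  set S : Set (M ⧸ N) := QuotientAddGroup.mk '' Ω
  have hSfin : S.Finite := (hΩc.image QuotientAddGroup.continuous_mk).finite_of_discrete
  have hmaps : MapsTo β S S := hsemi.mapsTo_image (mapsTo_iff_image_subset.mpr hΩinv)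
  have hcomap : N.comap α.toAddMonoidHom ≤ N := by
    conv_lhs => rw [← hNinv]
    exact (AddSubgroup.comap_map_eq_self_of_injective (f := α.toAddMonoidHom) α.injective N).le
  have hβinj : Injective β := QuotientAddGroup.injective_of_semiconj hcomap hsemi
  have hall : ∀ z : M ⧸ N, z ∈ S := by
    intro z
    induction z using QuotientAddGroup.induction_on with
    | H x =>
      obtain ⟨n, hn⟩ := hcover x
      refine hmaps.mem_of_iterate_mem_of_injective hSfin hβinj (n := n) ?_
      rw [← hsemi.iterate_right n x]
      exact mem_image_of_mem _ hn
  exact fun y => ⟨⊤, trivial, hSfin.subset fun z _ => hall z, fun _ _ => trivial⟩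

/-- let `M` be a locally compact abelian group and `α` a compacting
topological automorphism (there is a compact `Ω` with `α(Ω) ⊆ Ω` and `M = ⋃ₙ α⁻ⁿ(Ω)`).
Then every discrete quotient module `M/N` of `M` (by an open `α`-invariant subgroup `N`)
is locally finite as a `ℤ[α^{±1}]`-module: every element lies in a finite subgroup
invariant under the induced automorphism. -/
theorem stmt17 {M : Type*} [AddCommGroup M] [TopologicalSpace M] [IsTopologicalAddGroup M]
    [LocallyCompactSpace M]
    (α : M ≃+ M) (hc : Continuous α) (hc' : Continuous α.symm)
    (Ω : Set M) (hΩc : IsCompact Ω) (hΩinv : α '' Ω ⊆ Ω)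
    (hcover : ∀ x : M, ∃ n : ℕ, (⇑α)^[n] x ∈ Ω)
    (N : AddSubgroup M) (hNo : IsOpen (N : Set M))
    (hNinv : N.map α.toAddMonoidHom = N)
    (β : M ⧸ N →+ M ⧸ N)
    (hβ : ∀ x : M, β (QuotientAddGroup.mk x) = QuotientAddGroup.mk (α x)) :
    ∀ y : M ⧸ N, ∃ H : AddSubgroup (M ⧸ N),
      y ∈ H ∧ (H : Set (M ⧸ N)).Finite ∧ ∀ z ∈ H, β z ∈ H :=
  stmt17_general α Ω hΩc hΩinv hcover N hNo hNinv β hβ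
end

section
/- Let M be a locally compact abelian group with a contracting automorphism α and let M' be another locally compact abelian group on which α also acts as a contracting automorphism. Then every group homomorphism f : M → M' commuting with α that is locally bounded (image of every compact set has compact closure) is continuous. -/
open Filter Topology Function

/-! A locally bounded homomorphism maps a compact neighbourhood `K` of `0` into a compact set,
which `α'^[n]` pushes into any given neighbourhood `V` of `0`. Since `f ∘ α^[n] = α'^[n] ∘ f`,
`f` then maps the neighbourhood `α^[n] '' K` of `0` into `V`. -/

theorem AddMonoidHom.continuous_of_semiconj_of_eventually_mapsTo {M M' : Type*}
    [AddGroup M] [TopologicalSpace M] [IsTopologicalAddGroup M]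
    [AddGroup M'] [TopologicalSpace M'] [ContinuousAdd M']
    (α : M ≃+ M) (hα : Continuous α.symm) (α' : M' → M') (f : M →+ M')
    (hf : Semiconj f α α') {K : Set M} (hK : K ∈ 𝓝 0)
    (hcontr : ∀ V ∈ 𝓝 (0 : M'), ∃ n, ∀ x ∈ K, α'^[n] (f x) ∈ V) :
    Continuous f := by
  refine continuous_of_continuousAt_zero f fun V hV ↦ ?_
  rw [map_zero] at hV
  obtain ⟨n, hn⟩ := hcontr V hV
  have hpre : (⇑α.symm)^[n] ⁻¹' K ∈ 𝓝 (0 : M) :=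
    (hα.iterate n).continuousAt.preimage_mem_nhds (by rwa [iterate_fixed (map_zero α.symm)])
  refine mem_map.2 (mem_of_superset hpre fun x hx ↦ ?_)
  have hx' : (⇑α)^[n] ((⇑α.symm)^[n] x) = x := LeftInverse.iterate α.apply_symm_apply n x
  rw [Set.mem_preimage, ← hx', (hf.iterate_right n).eq]
  exact hn _ hx

theorem stmt18_general {M M' : Type*}
    [AddCommGroup M] [TopologicalSpace M] [IsTopologicalAddGroup M] [LocallyCompactSpace M]
    [AddCommGroup M'] [TopologicalSpace M'] [IsTopologicalAddGroup M']
    (α : M ≃+ M) (hc' : Continuous α.symm)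
    (α' : M' ≃+ M')
    (hcontr' : ∀ K : Set M', IsCompact K → ∀ U ∈ 𝓝 (0 : M'),
      ∀ᶠ n : ℕ in atTop, ∀ x ∈ K, (⇑α')^[n] x ∈ U)
    (f : M →+ M') (hint : ∀ x : M, f (α x) = α' (f x))
    (hlb : ∀ K : Set M, IsCompact K → IsCompact (closure (f '' K))) :
    Continuous f := by
  obtain ⟨K, hK, hK0⟩ := exists_compact_mem_nhds (0 : M)
  refine f.continuous_of_semiconj_of_eventually_mapsTo α hc' α' hint hK0 fun V hV ↦ ?_
  obtain ⟨n, hn⟩ := (hcontr' _ (hlb K hK) V hV).exists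
  exact ⟨n, fun x hx ↦ hn _ (subset_closure (Set.mem_image_of_mem f hx))⟩

/-- let `M`, `M'` be locally compact abelian groups with contracting
automorphisms `α`, `α'` respectively. Then every group homomorphism `f : M → M'`
intertwining `α` and `α'` that is locally bounded (images of compact sets have compact
closure) is continuous. -/
theorem stmt18 {M M' : Type*}
    [AddCommGroup M] [TopologicalSpace M] [IsTopologicalAddGroup M] [LocallyCompactSpace M]
    [AddCommGroup M'] [TopologicalSpace M'] [IsTopologicalAddGroup M']
    [LocallyCompactSpace M']
    (α : M ≃+ M) (hc : Continuous α) (hc' : Continuous α.symm)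
    (α' : M' ≃+ M') (hd : Continuous α') (hd' : Continuous α'.symm)
    (hcontr : ∀ K : Set M, IsCompact K → ∀ U ∈ 𝓝 (0 : M),
      ∀ᶠ n : ℕ in atTop, ∀ x ∈ K, (⇑α)^[n] x ∈ U)
    (hcontr' : ∀ K : Set M', IsCompact K → ∀ U ∈ 𝓝 (0 : M'),
      ∀ᶠ n : ℕ in atTop, ∀ x ∈ K, (⇑α')^[n] x ∈ U)
    (f : M →+ M') (hint : ∀ x : M, f (α x) = α' (f x))
    (hlb : ∀ K : Set M, IsCompact K → IsCompact (closure (f '' K))) :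
    Continuous f :=
  stmt18_general α hc' α' hcontr' f hint hlb
end
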